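/- arXiv:1501.02522 — 2 statements merged into one kernel-verified Lean document; each statement's English description precedes it below -/
import Mathlib

section
/- Let A be a self-adjoint operator on a complex Hilbert space H, and let R_t be a one-parameter family of vectors in H such that (i) R_t is twice differentiable in t, (ii) R_0 = 0 and (dR_t/dt)|_{t=0} = 0, (iii) R_t lies in the domain of A for all t, and (iv) d²R_t/dt² = -A R_t for all t. Then R_t = 0 for all t. -/
/-!
For solutions `u, v` of `u'' = -A u` with `A` symmetric, the Wronskian `⟪u', v⟫ - ⟪u, v'⟫` is
conserved, since its derivative is `⟪-A u, v⟫ - ⟪u, -A v⟫ = 0`. Pairing `u` with its time reversal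
`v = u (2t - ·)`, which is again a solution, the Wronskian at time `t` is `2 re ⟪u t, u' t⟫`, the
derivative of `‖u t‖²`, while at time `0` it vanishes by the initial conditions. Hence `‖u t‖²`
is constant, equal to `‖u 0‖² = 0`.
-/

open scoped InnerProductSpace

namespace LinearPMap

variable {𝕜 H : Type*} [RCLike 𝕜] [NormedAddCommGroup H] [InnerProductSpace 𝕜 H]

theorem _root_.IsSelfAdjoint.isFormalAdjoint_self [CompleteSpace H] {A : H →ₗ.[𝕜] H}
    (hA : IsSelfAdjoint A) : A.IsFormalAdjoint A := by
  have h := adjoint_isFormalAdjoint hA.dense_domain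
  rwa [isSelfAdjoint_def.mp hA] at h

variable [NormedSpace ℝ H]

structure IsWaveSolution (A : H →ₗ.[𝕜] H) (u u' : ℝ → H) : Prop where
  mem_domain : ∀ t, u t ∈ A.domain
  hasDerivAt : ∀ t, HasDerivAt u (u' t) t
  hasDerivAt_velocity : ∀ t, HasDerivAt u' (-A ⟨u t, mem_domain t⟩) t

namespace IsWaveSolution

variable {A : H →ₗ.[𝕜] H} {u u' v v' : ℝ → H}

theorem comp_const_sub (hu : A.IsWaveSolution u u') (s : ℝ) :
    A.IsWaveSolution (fun t => u (s - t)) (fun t => -u' (s - t)) where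
  mem_domain t := hu.mem_domain (s - t)
  hasDerivAt t := by
    simpa [Function.comp_def] using
      (hu.hasDerivAt (s - t)).scomp t ((hasDerivAt_id t).const_sub s)
  hasDerivAt_velocity t := by
    simpa [Function.comp_def] using
      ((hu.hasDerivAt_velocity (s - t)).scomp t ((hasDerivAt_id t).const_sub s)).fun_neg

theorem wronskian_eq [IsScalarTower ℝ 𝕜 H] (hA : A.IsFormalAdjoint A)
    (hu : A.IsWaveSolution u u') (hv : A.IsWaveSolution v v') (t : ℝ) :
    ⟪u' t, v t⟫_𝕜 - ⟪u t, v' t⟫_𝕜 = ⟪u' 0, v 0⟫_𝕜 - ⟪u 0, v' 0⟫_𝕜 := by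
  have hderiv : ∀ s, HasDerivAt (fun t => ⟪u' t, v t⟫_𝕜 - ⟪u t, v' t⟫_𝕜) 0 s := by
    intro s
    refine (((hu.hasDerivAt_velocity s).inner 𝕜 (hv.hasDerivAt s)).sub
      ((hu.hasDerivAt s).inner 𝕜 (hv.hasDerivAt_velocity s))).congr_deriv ?_
    rw [inner_neg_left, inner_neg_right, hA ⟨u s, hu.mem_domain s⟩ ⟨v s, hv.mem_domain s⟩]
    ring
  exact is_const_of_deriv_eq_zero (fun s => (hderiv s).differentiableAt)
    (fun s => (hderiv s).deriv) t 0

theorem inner_velocity_add_inner_velocity_eq_zero [IsScalarTower ℝ 𝕜 H]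
    (hA : A.IsFormalAdjoint A) (hu : A.IsWaveSolution u u') (hu₀ : u 0 = 0) (hu₀' : u' 0 = 0)
    (t : ℝ) :
    ⟪u' t, u t⟫_𝕜 + ⟪u t, u' t⟫_𝕜 = 0 := by
  have h := wronskian_eq hA hu (hu.comp_const_sub (2 * t)) t
  simpa [two_mul, hu₀, hu₀'] using h

theorem eq_zero_of_initial [IsScalarTower ℝ 𝕜 H] (hA : A.IsFormalAdjoint A)
    (hu : A.IsWaveSolution u u') (hu₀ : u 0 = 0) (hu₀' : u' 0 = 0) (t : ℝ) : u t = 0 := by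
  have hderiv : ∀ s, HasDerivAt (fun t => ⟪u t, u t⟫_𝕜) 0 s := fun s =>
    ((hu.hasDerivAt s).inner 𝕜 (hu.hasDerivAt s)).congr_deriv <| by
      rw [add_comm, inner_velocity_add_inner_velocity_eq_zero hA hu hu₀ hu₀' s]
  have h := is_const_of_deriv_eq_zero (fun s => (hderiv s).differentiableAt)
    (fun s => (hderiv s).deriv) t 0
  rw [hu₀, inner_zero_left] at h
  exact inner_self_eq_zero.mp h

end IsWaveSolution

end LinearPMap

/-- **Uniqueness lemma (Lemma 1 of Prabhu–Wald).**
Let `A` be a self-adjoint (possibly unbounded, densely defined) operator on a complex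
Hilbert space `H`, and let `R t` be a one-parameter family of vectors in `H` such that
(i) `R` is twice differentiable in `t` (with first derivative `R'` and second derivative `R''`),
(ii) `R 0 = 0` and `R' 0 = 0`, (iii) `R t` lies in the domain of `A` for all `t`, and
(iv) `R'' t = - A (R t)` for all `t`.  Then `R t = 0` for all `t`. -/
theorem uniqueness_of_second_order_hilbert_ode
    {H : Type*} [NormedAddCommGroup H] [InnerProductSpace ℂ H] [CompleteSpace H]
    (A : H →ₗ.[ℂ] H) (hA : IsSelfAdjoint A)
    (R R' R'' : ℝ → H)
    (hdom : ∀ t, R t ∈ A.domain)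
    (hd1 : ∀ t, HasDerivAt R (R' t) t)
    (hd2 : ∀ t, HasDerivAt R' (R'' t) t)
    (h0 : R 0 = 0) (h0' : R' 0 = 0)
    (hode : ∀ t, R'' t = -A ⟨R t, hdom t⟩) :
    ∀ t, R t = 0 := by
  have hR : A.IsWaveSolution R R' := ⟨hdom, hd1, fun t => hode t ▸ hd2 t⟩
  exact hR.eq_zero_of_initial hA.isFormalAdjoint_self h0 h0'
end

section
/- Let A be a self-adjoint operator on a complex Hilbert space H and let Q₀ ∈ dom(A) satisfy ⟨Q₀, A Q₀⟩ < 0. Then the solution Q_t of d²Q_t/dt² = -A Q_t with initial data Q_0 = Q₀, (dQ_t/dt)|_{t=0} = 0 grows exponentially: there exist constants C > 0 and α > 0 such that ‖Q_t‖ > C e^{α t} for all t ≥ 0. -/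
/-!
Since `A` is unbounded, `⟪Q, A Q⟫` cannot be differentiated directly. Instead, symmetry of `A`
makes the Wronskian of `Q` and of its time shift `Q (· + τ)` constant, and differentiating it in
`τ` yields conservation of energy: `re ⟪Q, Q''⟫ - ‖Q'‖² = a := -re ⟪Q₀, A Q₀⟫ > 0`.
Hence `N = ‖Q‖²`, `R = re ⟪Q, Q'⟫`, `K = ‖Q'‖²` satisfy the virial identities `N' = 2R`,
`R' = a + 2K`. Together with Cauchy–Schwarz `R² ≤ N K` this makes `a / N + R² / N²`
nondecreasing on `t ≥ 0`, so `b N ≤ a + K` with `b = a / N(0)`. Then `M = N - N(0) / 2` satisfies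
`M'' ≥ 4 b M`, `M(0) > 0`, `M'(0) = 0`, and comparison with `cosh` gives
`M(t) ≥ M(0) cosh (2 √b t)`.
-/

open scoped InnerProductSpace
open Real RCLike

section Comparison

variable {f f' f'' : ℝ → ℝ} {t : ℝ}

theorem apply_zero_le_of_hasDerivAt_nonneg (hf : ∀ s ≥ 0, HasDerivAt f (f' s) s)
    (hf' : ∀ s ≥ 0, 0 ≤ f' s) (ht : 0 ≤ t) : f 0 ≤ f t :=
  monotoneOn_of_hasDerivWithinAt_nonneg (convex_Ici 0)
    (fun s hs => (hf s hs).continuousAt.continuousWithinAt)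
    (fun s hs => (hf s (interior_subset hs)).hasDerivWithinAt)
    (fun s hs => hf' s (interior_subset hs)) Set.self_mem_Ici ht ht

theorem mul_exp_le_of_mul_le_deriv {c : ℝ} (hf : ∀ s ≥ 0, HasDerivAt f (f' s) s)
    (hf' : ∀ s ≥ 0, c * f s ≤ f' s) (ht : 0 ≤ t) : f 0 * exp (c * t) ≤ f t := by
  have hg : ∀ s ≥ 0, HasDerivAt (fun s => f s * exp (-c * s))
      ((f' s - c * f s) * exp (-c * s)) s := fun s hs =>
    ((hf s hs).mul ((hasDerivAt_id' s).const_mul (-c)).exp).congr_deriv (by ring)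
  have h := apply_zero_le_of_hasDerivAt_nonneg hg
    (fun s hs => mul_nonneg (sub_nonneg.2 (hf' s hs)) (exp_pos _).le) ht
  calc f 0 * exp (c * t) ≤ f t * exp (-c * t) * exp (c * t) := by
        simpa using mul_le_mul_of_nonneg_right h (exp_pos (c * t)).le
    _ = f t := by rw [mul_assoc, ← exp_add]; simp

theorem mul_cosh_le_of_sq_mul_le_deriv2 {c : ℝ} (hf : ∀ s ≥ 0, HasDerivAt f (f' s) s)
    (hf' : ∀ s ≥ 0, HasDerivAt f' (f'' s) s) (hf'' : ∀ s ≥ 0, c ^ 2 * f s ≤ f'' s)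
    (h0 : 0 ≤ f' 0) (ht : 0 ≤ t) : f 0 * cosh (c * t) ≤ f t := by
  -- `g = f' + c f` satisfies `g' ≥ c g`; then `h = f - f 0 cosh (c ·)` satisfies `h' ≥ -c h`.
  have hg : ∀ s ≥ 0, (f' 0 + c * f 0) * exp (c * s) ≤ f' s + c * f s := fun s hs =>
    mul_exp_le_of_mul_le_deriv (f := fun s => f' s + c * f s)
      (fun u hu => (hf' u hu).add ((hf u hu).const_mul c))
      (fun u hu => by nlinarith [hf'' u hu]) hs
  have h := mul_exp_le_of_mul_le_deriv (c := -c) (f := fun s => f s - f 0 * cosh (c * s))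
    (fun u hu => (hf u hu).sub (((hasDerivAt_id' u).const_mul c).cosh.const_mul (f 0)))
    (fun u hu => by
      have hexp := congrArg (c * f 0 * ·) (cosh_add_sinh (c * u))
      nlinarith [hg u hu, mul_nonneg h0 (exp_pos (c * u)).le]) ht
  simpa using h

theorem div_mul_le_add_of_virial {N R K : ℝ → ℝ} {a : ℝ} (ha : 0 ≤ a) (hN0 : 0 < N 0)
    (hR0 : R 0 = 0) (hN : ∀ t ≥ 0, HasDerivAt N (2 * R t) t)
    (hR : ∀ t ≥ 0, HasDerivAt R (a + 2 * K t) t) (hK : ∀ t ≥ 0, 0 ≤ K t)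
    (hRK : ∀ t ≥ 0, R t ^ 2 ≤ N t * K t) (ht : 0 ≤ t) :
    a / N 0 * N t ≤ a + K t := by
  have hRnonneg : ∀ s ≥ 0, 0 ≤ R s := fun s hs =>
    hR0 ▸ apply_zero_le_of_hasDerivAt_nonneg hR (fun u hu => by linarith [hK u hu]) hs
  have hNpos : ∀ s ≥ 0, 0 < N s := fun s hs =>
    hN0.trans_le <| apply_zero_le_of_hasDerivAt_nonneg hN
      (fun u hu => by linarith [hRnonneg u hu]) hs
  -- `a / N + R ^ 2 / N ^ 2` is nondecreasing, since its derivative is `4 R (N K - R ^ 2) / N ^ 3`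
  have hmono := apply_zero_le_of_hasDerivAt_nonneg
    (f := fun s => a / N s + R s ^ 2 / N s ^ 2)
    (f' := fun s => 4 * R s * (N s * K s - R s ^ 2) / N s ^ 3)
    (fun u hu => by
      have hNu := (hNpos u hu).ne'
      refine (((hasDerivAt_const u a).div (hN u hu) hNu).add
        (((hR u hu).pow 2).div ((hN u hu).pow 2) (pow_ne_zero 2 hNu))).congr_deriv ?_
      simp only [Pi.pow_apply]
      field_simp
      ring)
    (fun u hu => div_nonneg (mul_nonneg (mul_nonneg zero_le_four (hRnonneg u hu))
      (sub_nonneg.2 (hRK u hu))) (pow_nonneg (hNpos u hu).le 3)) ht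
  have hNt := hNpos t ht
  simp only [hR0, ne_eq, OfNat.ofNat_ne_zero, not_false_eq_true, zero_pow, zero_div,
    add_zero] at hmono
  calc a / N 0 * N t ≤ (a / N t + R t ^ 2 / N t ^ 2) * N t :=
        mul_le_mul_of_nonneg_right hmono hNt.le
    _ = a + R t ^ 2 / N t := by field_simp
    _ ≤ a + K t := by
      gcongr
      rw [div_le_iff₀ hNt]
      linarith [hRK t ht]

theorem virial_lower_bound {N R K : ℝ → ℝ} {a : ℝ} (ha : 0 < a) (hN0 : 0 < N 0) (hR0 : R 0 = 0)
    (hN : ∀ t ≥ 0, HasDerivAt N (2 * R t) t) (hR : ∀ t ≥ 0, HasDerivAt R (a + 2 * K t) t)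
    (hK : ∀ t ≥ 0, 0 ≤ K t) (hRK : ∀ t ≥ 0, R t ^ 2 ≤ N t * K t) (ht : 0 ≤ t) :
    N 0 / 4 * exp (2 * √(a / N 0) * t) < N t := by
  have hbN : a / N 0 * N 0 = a := div_mul_cancel₀ a hN0.ne'
  have hsq : (2 * √(a / N 0)) ^ 2 = 4 * (a / N 0) := by
    rw [mul_pow, sq_sqrt (div_pos ha hN0).le]; norm_num
  -- `(N - N 0 / 2)'' = 2 (a + 2 K) ≥ 4 (a / N 0) (N - N 0 / 2)`
  have hcosh := mul_cosh_le_of_sq_mul_le_deriv2 (f := fun s => N s - N 0 / 2)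
    (c := 2 * √(a / N 0)) (fun u hu => (hN u hu).sub_const _)
    (fun u hu => (hR u hu).const_mul 2)
    (fun u hu => by
      rw [hsq]
      nlinarith [div_mul_le_add_of_virial ha.le hN0 hR0 hN hR hK hRK hu])
    (by simp [hR0]) ht
  have hexp : exp (2 * √(a / N 0) * t) < 2 * cosh (2 * √(a / N 0) * t) := by
    rw [cosh_eq]; linarith [exp_pos (-(2 * √(a / N 0) * t))]
  nlinarith

end Comparison

section Energy

variable {𝕜 E : Type*} [RCLike 𝕜] [NormedAddCommGroup E] [InnerProductSpace 𝕜 E]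

theorem sq_re_inner_le (x y : E) : re ⟪x, y⟫_𝕜 ^ 2 ≤ ‖x‖ ^ 2 * ‖y‖ ^ 2 := by
  rw [← mul_pow, ← sq_abs]
  exact pow_le_pow_left₀ (abs_nonneg _) ((abs_re_le_norm _).trans (norm_inner_le_norm x y)) 2

theorem IsSelfAdjoint.isFormalAdjoint [CompleteSpace E] {A : E →ₗ.[𝕜] E}
    (hA : IsSelfAdjoint A) : A.IsFormalAdjoint A := by
  have h := LinearPMap.adjoint_isFormalAdjoint hA.dense_domain
  rwa [LinearPMap.isSelfAdjoint_def.1 hA] at h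

variable [NormedSpace ℝ E]

theorem HasDerivAt.re_inner {f g : ℝ → E} {f' g' : E} {t : ℝ} (hf : HasDerivAt f f' t)
    (hg : HasDerivAt g g' t) :
    HasDerivAt (fun s => re ⟪f s, g s⟫_𝕜) (re ⟪f t, g'⟫_𝕜 + re ⟪f', g t⟫_𝕜) t := by
  have h := (reCLM.hasFDerivAt (x := ⟪f t, g t⟫_𝕜)).comp_hasDerivAt t (hf.inner 𝕜 hg)
  simp only [reCLM_apply, map_add] at h
  exact h

variable {Q Q' Q'' : ℝ → E}

theorem wronskian_shift_eq (hQ : ∀ t, HasDerivAt Q (Q' t) t)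
    (hQ' : ∀ t, HasDerivAt Q' (Q'' t) t)
    (hsym : ∀ s t, re ⟪Q'' s, Q t⟫_𝕜 = re ⟪Q s, Q'' t⟫_𝕜) (τ s : ℝ) :
    re ⟪Q s, Q' (s + τ)⟫_𝕜 - re ⟪Q' s, Q (s + τ)⟫_𝕜 = re ⟪Q 0, Q' τ⟫_𝕜 - re ⟪Q' 0, Q τ⟫_𝕜 := by
  have hshift : ∀ {F F' : ℝ → E}, (∀ t, HasDerivAt F (F' t) t) →
      ∀ u, HasDerivAt (fun v => F (v + τ)) (F' (u + τ)) u :=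
    fun hF u => (hF (u + τ)).comp_add_const u τ
  have hderiv : ∀ u, HasDerivAt
      (fun v => re ⟪Q v, Q' (v + τ)⟫_𝕜 - re ⟪Q' v, Q (v + τ)⟫_𝕜) 0 u := fun u =>
    ((HasDerivAt.re_inner (hQ u) (hshift hQ' u)).sub
      (HasDerivAt.re_inner (hQ' u) (hshift hQ u))).congr_deriv (by rw [hsym]; ring)
  simpa using is_const_of_deriv_eq_zero (fun u => (hderiv u).differentiableAt)
    (fun u => (hderiv u).deriv) s 0

theorem re_inner_sub_norm_sq_eq (hQ : ∀ t, HasDerivAt Q (Q' t) t)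
    (hQ' : ∀ t, HasDerivAt Q' (Q'' t) t)
    (hsym : ∀ s t, re ⟪Q'' s, Q t⟫_𝕜 = re ⟪Q s, Q'' t⟫_𝕜) (s : ℝ) :
    re ⟪Q s, Q'' s⟫_𝕜 - ‖Q' s‖ ^ 2 = re ⟪Q 0, Q'' 0⟫_𝕜 - ‖Q' 0‖ ^ 2 := by
  have hshift : ∀ {F F' : ℝ → E}, (∀ t, HasDerivAt F (F' t) t) →
      HasDerivAt (fun τ => F (s + τ)) (F' s) 0 := fun hF => by
    simpa using (hF (s + 0)).comp_const_add s 0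
  have hleft : HasDerivAt (fun τ => re ⟪Q 0, Q' τ⟫_𝕜 - re ⟪Q' 0, Q τ⟫_𝕜)
      (re ⟪Q s, Q'' s⟫_𝕜 - ‖Q' s‖ ^ 2) 0 := by
    rw [← funext (wronskian_shift_eq hQ hQ' hsym · s)]
    exact (((hasDerivAt_const 0 (Q s)).re_inner (hshift hQ')).fun_sub
      ((hasDerivAt_const 0 (Q' s)).re_inner (hshift hQ))).congr_deriv (by simp)
  have hright : HasDerivAt (fun τ => re ⟪Q 0, Q' τ⟫_𝕜 - re ⟪Q' 0, Q τ⟫_𝕜)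
      (re ⟪Q 0, Q'' 0⟫_𝕜 - ‖Q' 0‖ ^ 2) 0 :=
    (((hasDerivAt_const 0 (Q 0)).re_inner (hQ' 0)).fun_sub
      ((hasDerivAt_const 0 (Q' 0)).re_inner (hQ 0))).congr_deriv (by simp)
  exact hleft.unique hright

end Energy

/-- **Proposition 3 of Prabhu–Wald (exponential growth from negative energy).**
Let `A` be a self-adjoint operator on a complex Hilbert space `H` and let `Q₀ ∈ dom A`
satisfy `⟨Q₀, A Q₀⟩ < 0`.  Then the solution `Q t` of `Q̈ = -A Q` with initial data
`Q 0 = Q₀`, `Q̇ 0 = 0` grows exponentially: there exist `C > 0` and `α > 0` such that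
`‖Q t‖ > C e^{α t}` for all `t ≥ 0`. -/
theorem exponential_growth_of_negative_energy
    {H : Type*} [NormedAddCommGroup H] [InnerProductSpace ℂ H] [CompleteSpace H]
    (A : H →ₗ.[ℂ] H) (hA : IsSelfAdjoint A)
    (Q Q' Q'' : ℝ → H)
    (hdom : ∀ t, Q t ∈ A.domain)
    (hd1 : ∀ t, HasDerivAt Q (Q' t) t)
    (hd2 : ∀ t, HasDerivAt Q' (Q'' t) t)
    (h0' : Q' 0 = 0)
    (hode : ∀ t, Q'' t = -A ⟨Q t, hdom t⟩)
    (hneg : (⟪Q 0, A ⟨Q 0, hdom 0⟩⟫_ℂ).re < 0) :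
    ∃ C > (0:ℝ), ∃ α > (0:ℝ), ∀ t ≥ (0:ℝ), C * Real.exp (α * t) < ‖Q t‖ := by
  have hsym : ∀ s t, re ⟪Q'' s, Q t⟫_ℂ = re ⟪Q s, Q'' t⟫_ℂ := fun s t => by
    rw [hode, hode, inner_neg_left, inner_neg_right,
      hA.isFormalAdjoint ⟨Q s, hdom s⟩ ⟨Q t, hdom t⟩]
  have ha : 0 < re ⟪Q 0, Q'' 0⟫_ℂ := by
    rw [hode 0, inner_neg_right, map_neg]
    exact neg_pos.2 hneg
  have hQ0 : Q 0 ≠ 0 := fun h => by simp [h] at ha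
  have hN : ∀ t, HasDerivAt (‖Q ·‖ ^ 2) (2 * re ⟪Q t, Q' t⟫_ℂ) t := fun t => by
    have h := (hd1 t).re_inner (𝕜 := ℂ) (hd1 t)
    simp only [inner_self_eq_norm_sq] at h
    exact h.congr_deriv (by rw [inner_re_symm]; ring)
  have hR : ∀ t, HasDerivAt (fun t => re ⟪Q t, Q' t⟫_ℂ)
      (re ⟪Q 0, Q'' 0⟫_ℂ + 2 * ‖Q' t‖ ^ 2) t := fun t =>
    ((hd1 t).re_inner (hd2 t)).congr_deriv (by
      have henergy := re_inner_sub_norm_sq_eq hd1 hd2 hsym t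
      rw [h0', norm_zero] at henergy
      rw [inner_self_eq_norm_sq]
      linarith)
  refine ⟨‖Q 0‖ / 2, by positivity, √(re ⟪Q 0, Q'' 0⟫_ℂ / ‖Q 0‖ ^ 2), by positivity,
    fun t ht => ?_⟩
  have growth := virial_lower_bound (N := (‖Q ·‖ ^ 2)) ha (by positivity) (by simp [h0'])
    (fun t _ => hN t) (fun t _ => hR t) (fun t _ => by positivity)
    (fun t _ => sq_re_inner_le (Q t) (Q' t)) ht
  refine lt_of_pow_lt_pow_left₀ 2 (norm_nonneg _) (lt_of_eq_of_lt ?_ growth)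
  rw [mul_pow, ← exp_nat_mul]
  ring_nf
end
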